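/- If positions i < j of π satisfy π(i) < π(j) (a non-inversion), then in S(π) the letter π(i) appears before the letter π(j); i.e., stack-sort never creates new inversions among values that were in increasing order of position and value. -/

import Mathlib

/-!
A letter waits on the stack only until a larger letter is read, and the stack increases from top
to bottom. So if `a < b` and `a` is read before `b`, then when `b` is read `a` has either already
been output or is still on the stack, in which case it is popped before `b` is pushed.
-/

/-- Pop from the stack (top first) all letters smaller than `x`;
returns (popped output, remaining stack). -/
def stackPop (x : ℕ) : List ℕ → List ℕ × List ℕ
  | [] => ([], [])
  | t :: ts =>
    if t < x then
      let p := stackPop x ts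
      (t :: p.1, p.2)
    else ([], t :: ts)

/-- Run the stack-sorting procedure with the given stack and input;
at the end the (increasing) stack is flushed to the output. -/
def stackRun : List ℕ → List ℕ → List ℕ
  | stack, [] => stack
  | stack, x :: xs =>
    let p := stackPop x stack
    p.1 ++ stackRun (x :: p.2) xs

/-- The stack-sort operator: one pass of a permutation (word) through a stack. -/
def S (w : List ℕ) : List ℕ := stackRun [] w

/-- `w` is (the one-line notation of) a permutation of `{1, …, n}`. -/
def IsPermOf (w : List ℕ) (n : ℕ) : Prop := w.Perm (List.range' 1 n)

/-- The identity permutation `1 2 ⋯ n` in one-line notation. -/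
def idPerm (n : ℕ) : List ℕ := List.range' 1 n

open List

theorem List.mem_dropWhile_of_mem_of_not {α : Type*} {p : α → Bool} {s : List α} {a : α}
    (ha : a ∈ s) (hpa : ¬p a) : a ∈ s.dropWhile p := by
  rw [← takeWhile_append_dropWhile (p := p) (l := s), mem_append] at ha
  exact ha.resolve_left fun h => hpa (mem_takeWhile_imp h)

theorem List.pair_getElem_sublist {β : Type*} (l : List β) {i j : ℕ} (hi : i < l.length)
    (hj : j < l.length) (hij : i < j) : [l[i], l[j]] <+ l :=
  pairwise_iff_getElem.1 ((pairwise_iff_forall_sublist (R := fun a b => [a, b] <+ l)).2 id)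
    i j hi hj hij

theorem List.Nodup.idxOf_lt_idxOf_of_pair_sublist {β : Type*} [DecidableEq β] {l : List β}
    (hl : l.Nodup) {a b : β} (h : [a, b] <+ l) : l.idxOf a < l.idxOf b := by
  have : l.Pairwise (fun x y => l.idxOf x < l.idxOf y) :=
    pairwise_iff_getElem.2 fun i j hi hj hij => by
      rwa [hl.idxOf_getElem, hl.idxOf_getElem]
  exact pairwise_iff_forall_sublist.1 this h

section SortedStack

variable {α : Type*} [LinearOrder α] {x : α} {s : List α}

theorem List.le_of_mem_dropWhile_lt (hs : s.Pairwise (· ≤ ·)) {y : α}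
    (hy : y ∈ s.dropWhile (· < x)) : x ≤ y := by
  induction s with
  | nil => simp at hy
  | cons t s ih =>
    by_cases htx : t < x
    · rw [dropWhile_cons_of_pos (by simpa using htx)] at hy
      exact ih hs.of_cons hy
    · rw [dropWhile_cons_of_neg (by simpa using htx), mem_cons] at hy
      rcases hy with rfl | hy
      · exact not_lt.1 htx
      · exact (not_lt.1 htx).trans (rel_of_pairwise_cons hs hy)

theorem List.mem_takeWhile_lt (hs : s.Pairwise (· ≤ ·)) {a : α} (ha : a ∈ s) (hax : a < x) :
    a ∈ s.takeWhile (· < x) := by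
  rw [← takeWhile_append_dropWhile (p := (· < x)) (l := s), mem_append] at ha
  exact ha.resolve_right fun h => (le_of_mem_dropWhile_lt hs h).not_gt hax

theorem List.Pairwise.cons_dropWhile_lt (hs : s.Pairwise (· ≤ ·)) :
    (x :: s.dropWhile (· < x)).Pairwise (· ≤ ·) :=
  pairwise_cons.2 ⟨fun _ hy => le_of_mem_dropWhile_lt hs hy, hs.sublist (dropWhile_sublist _)⟩

end SortedStack

theorem stackPop_eq_takeWhile_dropWhile (x : ℕ) (s : List ℕ) :
    stackPop x s = (s.takeWhile (· < x), s.dropWhile (· < x)) := by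
  induction s with
  | nil => rfl
  | cons t s ih => by_cases h : t < x <;> simp [stackPop, h, ih]

theorem stackRun_cons (s : List ℕ) (x : ℕ) (xs : List ℕ) :
    stackRun s (x :: xs) = s.takeWhile (· < x) ++ stackRun (x :: s.dropWhile (· < x)) xs := by
  simp only [stackRun, stackPop_eq_takeWhile_dropWhile]

theorem stackRun_perm (s xs : List ℕ) : stackRun s xs ~ s ++ xs := by
  induction xs generalizing s with
  | nil => simp [stackRun]
  | cons x xs ih =>
    rw [stackRun_cons]
    calc s.takeWhile (· < x) ++ stackRun (x :: s.dropWhile (· < x)) xs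
        _ ~ s.takeWhile (· < x) ++ (x :: s.dropWhile (· < x) ++ xs) := (ih _).append_left _
        _ ~ s.takeWhile (· < x) ++ s.dropWhile (· < x) ++ x :: xs := by
          rw [append_assoc]; exact perm_middle.symm.append_left _
        _ = s ++ x :: xs := by rw [takeWhile_append_dropWhile]

theorem nodup_S {w : List ℕ} (hw : w.Nodup) : (S w).Nodup :=
  (stackRun_perm [] w).nodup_iff.2 hw

theorem pair_sublist_stackRun_of_mem_stack {a b : ℕ} (hab : a < b) {s xs : List ℕ}
    (hs : s.Pairwise (· ≤ ·)) (ha : a ∈ s) (hb : b ∈ xs) : [a, b] <+ stackRun s xs := by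
  induction xs generalizing s with
  | nil => simp at hb
  | cons x xs ih =>
    rw [stackRun_cons]
    by_cases hax : a < x
    · have hb' : b ∈ stackRun (x :: s.dropWhile (· < x)) xs :=
        (stackRun_perm _ _).mem_iff.2 (((sublist_append_right _ xs).cons_cons x).subset hb)
      exact (singleton_sublist.2 (mem_takeWhile_lt hs ha hax)).append (singleton_sublist.2 hb')
    · have hbx : b ∈ xs := (mem_cons.1 hb).resolve_left (by omega)
      have ha' : a ∈ s.dropWhile (· < x) := mem_dropWhile_of_mem_of_not ha (by simpa using hax)
      exact (ih hs.cons_dropWhile_lt (mem_cons_of_mem _ ha') hbx).trans (sublist_append_right _ _)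

theorem pair_sublist_stackRun {a b : ℕ} (hab : a < b) {s xs : List ℕ}
    (hs : s.Pairwise (· ≤ ·)) (h : [a, b] <+ xs) : [a, b] <+ stackRun s xs := by
  induction xs generalizing s with
  | nil => simp at h
  | cons x xs ih =>
    rw [stackRun_cons]
    refine Sublist.trans ?_ (sublist_append_right _ _)
    cases h with
    | cons _ h => exact ih hs.cons_dropWhile_lt h
    | cons_cons _ h =>
      exact pair_sublist_stackRun_of_mem_stack hab hs.cons_dropWhile_lt mem_cons_self
        (singleton_sublist.1 h)

theorem pair_sublist_S {a b : ℕ} (hab : a < b) {w : List ℕ} (h : [a, b] <+ w) :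
    [a, b] <+ S w :=
  pair_sublist_stackRun hab Pairwise.nil h

/-- stack-sort never reverses a non-inversion: if `i < j` and
`w i < w j`, then `w i` still precedes `w j` in `S w`. -/
theorem noninversion_preserved (w : List ℕ) (hw : w.Nodup)
    (i j : Fin w.length) (hij : i < j) (hval : w.get i < w.get j) :
    (S w).idxOf (w.get i) < (S w).idxOf (w.get j) :=
  (nodup_S hw).idxOf_lt_idxOf_of_pair_sublist
    (pair_sublist_S hval (w.pair_getElem_sublist i.isLt j.isLt hij))
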